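/- In the setting of the local existence theorem (with M₀ > 0, M > M₀, r = r(M₀,M) > 0, (φ,τ₀) ∈ Lip_α × C_+(Ω) with ‖φ‖_{Lip_α} + ‖τ₀‖_∞ ≤ M₀, and (A,τ) the unique solution of system (1.1) on [0,r] with ‖A(t,·)‖_∞ ≤ M for t ∈ [0,r]), one has A_t ∈ Lip_α for every t ∈ [0,r], where A_t(θ,·) := A(t+θ,·) for θ ≤ 0; moreover there exists a constant M̂ = M̂(M, τ_max, α) > M, depending only on M, on the a priori upper bound τ_max for the delay, and on α, such that ‖A_t‖_{Lip_α} ≤ M̂ for all t ∈ [0,r]. -/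

import Mathlib

/-!
On `[0, r]` the solution is Lipschitz: it is a primitive of `l ↦ F(A l, τ l, A(l − τ l))`, which
is continuous (`F` is locally Lipschitz) on the compact interval `[0, r]` and hence bounded.
For `θ ≤ −t` the weighted history `(A_t)_α(θ)` is `e^{−αt} ≤ 1` times `φ_α(t + θ)`, so it inherits
the bound and Lipschitz constant of `φ_α`; on `[−t, 0]` it is the product of the `α`-Lipschitz
weight `e^{−α|θ|} ≤ 1` and the bounded Lipschitz map `θ ↦ A(t + θ)`. Gluing the two pieces at `−t`
gives a bound that does not depend on `t`.
-/

open scoped NNReal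
open MeasureTheory intervalIntegral Set

/-- The weighted history `φ_α(t) = e^{−α|t|} φ(t)`. -/
noncomputable def weightedHist {Ω : Type*} [TopologicalSpace Ω]
    (α : ℝ) (φ : ℝ → C(Ω, ℝ)) : ℝ → C(Ω, ℝ) :=
  fun t => Real.exp (-(α * |t|)) • φ t

/-- Membership in `Lip_α`: `φ_α` is bounded and Lipschitz from `(−∞,0]` to `C(Ω)`. -/
def MemLipAlpha {Ω : Type*} [TopologicalSpace Ω] [CompactSpace Ω]
    (α : ℝ) (φ : ℝ → C(Ω, ℝ)) : Prop :=
  ContinuousOn φ (Set.Iic 0) ∧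
  (∃ C : ℝ, ∀ t ≤ (0 : ℝ), ‖weightedHist α φ t‖ ≤ C) ∧
  (∃ L : ℝ≥0, LipschitzOnWith L (weightedHist α φ) (Set.Iic 0))

/-- The norm of `Lip_α`: `‖φ_α‖_∞ + ‖φ_α‖_{Lip}`. -/
noncomputable def lipAlphaNorm {Ω : Type*} [TopologicalSpace Ω] [CompactSpace Ω]
    (α : ℝ) (φ : ℝ → C(Ω, ℝ)) : ℝ :=
  sSup {c : ℝ | ∃ t ≤ (0 : ℝ), c = ‖weightedHist α φ t‖} +
  sSup {c : ℝ | ∃ t ≤ (0 : ℝ), ∃ s ≤ (0 : ℝ), t ≠ s ∧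
    c = ‖weightedHist α φ t - weightedHist α φ s‖ / |t - s|}

/-- `F : C(Ω)² × C(Ω×Ω) → C(Ω)` is Lipschitz continuous on bounded sets. -/
def LipschitzOnBoundedSets {Ω : Type*} [TopologicalSpace Ω] [CompactSpace Ω]
    (F : C(Ω, ℝ) → C(Ω, ℝ) → C(Ω × Ω, ℝ) → C(Ω, ℝ)) : Prop :=
  ∀ M : ℝ, 0 < M → ∃ L : ℝ, 0 < L ∧
    ∀ u v : C(Ω, ℝ), ∀ w : C(Ω × Ω, ℝ), ∀ u' v' : C(Ω, ℝ), ∀ w' : C(Ω × Ω, ℝ),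
      ‖u‖ ≤ M → ‖v‖ ≤ M → ‖w‖ ≤ M → ‖u'‖ ≤ M → ‖v'‖ ≤ M → ‖w'‖ ≤ M →
      ‖F u v w - F u' v' w'‖ ≤ L * (‖u - u'‖ + ‖v - v'‖ + ‖w - w'‖)

/-- A solution of system (1.1) on [0,r] with initial distribution (φ,τ₀):
a pair of continuous maps `A : (−∞,r] → C(Ω)` and `τ : [0,r] → C₊(Ω)` such that
`A = φ` on `(−∞,0]`, `A(t,x) = φ(0,x) + ∫₀ᵗ F(A(l,·), τ(l,·), A(l−τ(l))(·,·))(x) dl`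
for `t ∈ [0,r]` (where `A(l−τ(l))(x,y) = A(l−τ(l,x),y)`), and
`∫_{t−τ(t,x)}^{t} f(A(s,·))(x) ds = ∫_{−τ₀(x)}^{0} f(φ(s,·))(x) ds` on `[0,r]`. -/
def IsSolutionOn {Ω : Type*} [TopologicalSpace Ω] [CompactSpace Ω]
    (F : C(Ω, ℝ) → C(Ω, ℝ) → C(Ω × Ω, ℝ) → C(Ω, ℝ))
    (f : C(Ω, ℝ) → C(Ω, ℝ))
    (φ : ℝ → C(Ω, ℝ)) (τ₀ : C(Ω, ℝ)) (r : ℝ)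
    (A : ℝ → C(Ω, ℝ)) (τ : ℝ → C(Ω, ℝ)) : Prop :=
  ContinuousOn A (Set.Iic r) ∧
  ContinuousOn τ (Set.Icc 0 r) ∧
  (∀ t ∈ Set.Icc (0 : ℝ) r, ∀ x : Ω, 0 ≤ τ t x) ∧
  (∀ t ≤ (0 : ℝ), A t = φ t) ∧
  (∃ w : ℝ → C(Ω × Ω, ℝ),
    (∀ l ∈ Set.Icc (0 : ℝ) r, ∀ x y : Ω, w l (x, y) = A (l - τ l x) y) ∧
    (∀ t ∈ Set.Icc (0 : ℝ) r, ∀ x : Ω,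
      A t x = φ 0 x + ∫ l in (0 : ℝ)..t, F (A l) (τ l) (w l) x)) ∧
  (∀ t ∈ Set.Icc (0 : ℝ) r, ∀ x : Ω,
    (∫ s in (t - τ t x)..t, f (A s) x) = ∫ s in (-(τ₀ x))..(0 : ℝ), f (φ s) x)

open Real

lemma abs_exp_sub_exp_le_of_nonpos {a b : ℝ} (ha : a ≤ 0) (hb : b ≤ 0) :
    |exp a - exp b| ≤ |a - b| := by
  wlog hab : a ≤ b generalizing a b
  · rw [abs_sub_comm, abs_sub_comm a]; exact this hb ha (le_of_not_ge hab)
  -- `exp b - exp a = exp b (1 - exp (a - b)) ≤ 1 · (b - a)` since `exp b ≤ 1` and `1 + x ≤ exp x`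
  have hsplit : exp a = exp (a - b) * exp b := by rw [← exp_add, sub_add_cancel]
  rw [abs_of_nonpos (sub_nonpos.2 (exp_le_exp.2 hab)), abs_of_nonpos (sub_nonpos.2 hab), hsplit]
  nlinarith [add_one_le_exp (a - b), exp_pos b, exp_le_one_iff.2 hb]

lemma lipschitzWith_exp_neg_mul_abs (α : ℝ≥0) :
    LipschitzWith α (fun θ : ℝ => exp (-(α * |θ|))) := by
  refine LipschitzWith.of_dist_le_mul fun θ θ' => ?_
  simp only [Real.dist_eq]
  calc |exp (-(α * |θ|)) - exp (-(α * |θ'|))| ≤ |-(α * |θ|) - -(α * |θ'|)| :=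
        abs_exp_sub_exp_le_of_nonpos (by simp; positivity) (by simp; positivity)
    _ = α * |(|θ| - |θ'|)| := by
        rw [show -(α * |θ|) - -(α * |θ'|) = α * (|θ'| - |θ|) by ring, abs_mul, NNReal.abs_eq,
          abs_sub_comm]
    _ ≤ α * |θ - θ'| := mul_le_mul_of_nonneg_left (abs_abs_sub_abs_le_abs_sub θ θ') α.coe_nonneg

lemma LipschitzOnWith.smul_of_norm_le {X 𝕜 E : Type*} [PseudoMetricSpace X] [NormedField 𝕜]
    [SeminormedAddCommGroup E] [NormedSpace 𝕜 E] {c : X → 𝕜} {g : X → E} {s : Set X}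
    {Kc Kg Cc Cg : ℝ≥0} (hc : LipschitzOnWith Kc c s) (hg : LipschitzOnWith Kg g s)
    (hCc : ∀ x ∈ s, ‖c x‖ ≤ Cc) (hCg : ∀ x ∈ s, ‖g x‖ ≤ Cg) :
    LipschitzOnWith (Kc * Cg + Cc * Kg) (fun x => c x • g x) s := by
  refine LipschitzOnWith.of_dist_le_mul fun x hx y hy => ?_
  rw [dist_eq_norm, show c x • g x - c y • g y = (c x - c y) • g x + c y • (g x - g y) by
    rw [sub_smul, smul_sub]; abel]
  have hcxy := hc.dist_le_mul x hx y hy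
  have hgxy := hg.dist_le_mul x hx y hy
  rw [dist_eq_norm] at hcxy hgxy
  calc ‖(c x - c y) • g x + c y • (g x - g y)‖
      ≤ ‖c x - c y‖ * ‖g x‖ + ‖c y‖ * ‖g x - g y‖ := by
        grw [norm_add_le, norm_smul, norm_smul]
    _ ≤ (Kc * dist x y) * Cg + Cc * (Kg * dist x y) :=
        add_le_add (mul_le_mul hcxy (hCg x hx) (norm_nonneg _) (by positivity))
          (mul_le_mul (hCc y hy) hgxy (norm_nonneg _) Cc.coe_nonneg)
    _ = ↑(Kc * Cg + Cc * Kg) * dist x y := by push_cast; ring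

lemma LipschitzOnWith.Iic_union_Icc {E : Type*} [PseudoMetricSpace E] {f : ℝ → E} {K : ℝ≥0}
    {a b : ℝ} (h₁ : LipschitzOnWith K f (Iic a)) (h₂ : LipschitzOnWith K f (Icc a b)) :
    LipschitzOnWith K f (Iic b) := by
  refine LipschitzOnWith.of_dist_le_mul fun x hx y hy => ?_
  wlog hxy : x ≤ y generalizing x y
  · rw [dist_comm, dist_comm x]; exact this y hy x hx (le_of_not_ge hxy)
  rcases le_total y a with hya | hay
  · exact h₁.dist_le_mul x (hxy.trans hya) y hya
  rcases le_total a x with hax | hxa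
  · exact h₂.dist_le_mul x ⟨hax, hx⟩ y ⟨hay, hy⟩
  calc dist (f x) (f y) ≤ dist (f x) (f a) + dist (f a) (f y) := dist_triangle _ _ _
    _ ≤ K * dist x a + K * dist a y :=
        add_le_add (h₁.dist_le_mul x hxa a (mem_Iic.2 le_rfl))
          (h₂.dist_le_mul a ⟨le_rfl, hay.trans hy⟩ y ⟨hay, hy⟩)
    _ = K * dist x y := by
        simp only [Real.dist_eq, abs_of_nonpos (sub_nonpos.2 hxa), abs_of_nonpos (sub_nonpos.2 hay),
          abs_of_nonpos (sub_nonpos.2 hxy)]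
        ring

section Shift

variable {Ω : Type*} [TopologicalSpace Ω] {ψ : ℝ → C(Ω, ℝ)} {t : ℝ}

lemma weightedHist_shift_of_add_nonpos {α : ℝ} (ht : 0 ≤ t) {θ : ℝ} (hθ : t + θ ≤ 0) :
    weightedHist α (fun θ => ψ (t + θ)) θ = exp (-(α * t)) • weightedHist α ψ (t + θ) := by
  simp only [weightedHist, smul_smul, ← exp_add]
  rw [abs_of_nonpos (by linarith : θ ≤ 0), abs_of_nonpos hθ]
  ring_nf

variable [CompactSpace Ω] {α : ℝ≥0}

lemma norm_weightedHist_shift_le {C : ℝ} (ht : 0 ≤ t)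
    (hpast : ∀ s ≤ 0, ‖weightedHist α ψ s‖ ≤ C) (hpresent : ∀ s ∈ Icc 0 t, ‖ψ s‖ ≤ C)
    {θ : ℝ} (hθ : θ ≤ 0) : ‖weightedHist α (fun θ => ψ (t + θ)) θ‖ ≤ C := by
  rcases le_total (t + θ) 0 with hle | hge
  · rw [weightedHist_shift_of_add_nonpos ht hle, norm_smul, norm_of_nonneg (exp_pos _).le]
    exact (mul_le_of_le_one_left (norm_nonneg _)
      (exp_le_one_iff.2 (by simp only [neg_nonpos]; positivity))).trans (hpast _ hle)
  · rw [weightedHist, norm_smul, norm_of_nonneg (exp_pos _).le]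
    exact (mul_le_of_le_one_left (norm_nonneg _)
      (exp_le_one_iff.2 (by simp only [neg_nonpos]; positivity))).trans
      (hpresent _ ⟨hge, by linarith⟩)

lemma lipschitzOnWith_weightedHist_shift_Iic {L : ℝ≥0} (ht : 0 ≤ t)
    (hL : LipschitzOnWith L (weightedHist α ψ) (Iic 0)) :
    LipschitzOnWith L (weightedHist α (fun θ => ψ (t + θ))) (Iic (-t)) := by
  refine LipschitzOnWith.of_dist_le_mul fun θ hθ θ' hθ' => ?_
  have hθ₀ : t + θ ≤ 0 := by linarith [mem_Iic.1 hθ]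
  have hθ₀' : t + θ' ≤ 0 := by linarith [mem_Iic.1 hθ']
  rw [weightedHist_shift_of_add_nonpos ht hθ₀, weightedHist_shift_of_add_nonpos ht hθ₀',
    dist_eq_norm, ← smul_sub, norm_smul, ← dist_eq_norm, norm_of_nonneg (exp_pos _).le]
  calc exp (-(α * t)) * dist (weightedHist α ψ (t + θ)) (weightedHist α ψ (t + θ'))
      ≤ 1 * (L * dist (t + θ) (t + θ')) :=
        mul_le_mul (exp_le_one_iff.2 (by simp only [neg_nonpos]; positivity))
          (hL.dist_le_mul _ hθ₀ _ hθ₀') dist_nonneg zero_le_one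
    _ = L * dist θ θ' := by rw [one_mul, dist_add_left]

lemma lipschitzOnWith_weightedHist_shift_Icc {B C : ℝ≥0} (hC : ∀ s ∈ Icc 0 t, ‖ψ s‖ ≤ C)
    (hB : LipschitzOnWith B ψ (Icc 0 t)) :
    LipschitzOnWith (α * C + B) (weightedHist α (fun θ => ψ (t + θ))) (Icc (-t) 0) := by
  have hmaps : ∀ θ ∈ Icc (-t) 0, t + θ ∈ Icc 0 t := fun θ hθ =>
    ⟨by linarith [hθ.1], by linarith [hθ.2]⟩
  have hshift : LipschitzOnWith B (fun θ => ψ (t + θ)) (Icc (-t) 0) :=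
    LipschitzOnWith.of_dist_le_mul fun θ hθ θ' hθ' => by
      simpa only [dist_add_left] using hB.dist_le_mul _ (hmaps θ hθ) _ (hmaps θ' hθ')
  have hweight : ∀ θ ∈ Icc (-t) 0, ‖exp (-(α * |θ|))‖ ≤ (1 : ℝ≥0) := fun θ _ => by
    rw [norm_of_nonneg (exp_pos _).le, NNReal.coe_one, exp_le_one_iff, neg_nonpos]
    positivity
  have hprod := (lipschitzWith_exp_neg_mul_abs α).lipschitzOnWith.smul_of_norm_le hshift hweight
    (fun θ hθ => hC _ (hmaps θ hθ))
  rw [one_mul] at hprod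
  exact hprod

lemma lipAlphaNorm_le {α C : ℝ} {L : ℝ≥0} {φ : ℝ → C(Ω, ℝ)}
    (hC : ∀ s ≤ 0, ‖weightedHist α φ s‖ ≤ C) (hL : LipschitzOnWith L (weightedHist α φ) (Iic 0)) :
    lipAlphaNorm α φ ≤ C + L := by
  refine add_le_add (Real.sSup_le ?_ ((norm_nonneg _).trans (hC 0 le_rfl)))
    (Real.sSup_le ?_ L.coe_nonneg)
  · rintro c ⟨s, hs, rfl⟩
    exact hC s hs
  · rintro c ⟨s, hs, s', hs', hne, rfl⟩
    rw [div_le_iff₀ (abs_pos.2 (sub_ne_zero.2 hne))]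
    simpa only [dist_eq_norm, Real.norm_eq_abs] using hL.dist_le_mul s hs s' hs'

theorem memLipAlpha_shift_and_lipAlphaNorm_le {L B C : ℝ≥0} (ht : 0 ≤ t)
    (hcont : ContinuousOn ψ (Iic t))
    (hpast : ∀ s ≤ 0, ‖weightedHist α ψ s‖ ≤ C) (hL : LipschitzOnWith L (weightedHist α ψ) (Iic 0))
    (hpresent : ∀ s ∈ Icc 0 t, ‖ψ s‖ ≤ C) (hB : LipschitzOnWith B ψ (Icc 0 t)) :
    MemLipAlpha α (fun θ => ψ (t + θ)) ∧
      lipAlphaNorm α (fun θ => ψ (t + θ)) ≤ C + ↑(L + α * C + B) := by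
  have hbd : ∀ θ ≤ 0, ‖weightedHist α (fun θ => ψ (t + θ)) θ‖ ≤ C :=
    fun θ hθ => norm_weightedHist_shift_le ht hpast hpresent hθ
  have hlip : LipschitzOnWith (L + α * C + B) (weightedHist α (fun θ => ψ (t + θ))) (Iic 0) :=
    ((lipschitzOnWith_weightedHist_shift_Iic ht hL).weaken
        (by rw [add_assoc]; exact le_self_add)).Iic_union_Icc
      ((lipschitzOnWith_weightedHist_shift_Icc hpresent hB).weaken
        (by rw [add_assoc]; exact le_add_self))
  refine ⟨⟨hcont.comp (by fun_prop) fun θ hθ => ?_, ⟨C, hbd⟩, ⟨_, hlip⟩⟩, lipAlphaNorm_le hbd hlip⟩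
  simp only [mem_Iic] at hθ ⊢
  linarith

end Shift

section Solution

variable {Ω : Type*} [TopologicalSpace Ω] [CompactSpace Ω]

lemma LipschitzOnBoundedSets.continuous {F : C(Ω, ℝ) → C(Ω, ℝ) → C(Ω × Ω, ℝ) → C(Ω, ℝ)}
    (hF : LipschitzOnBoundedSets F) :
    Continuous (fun p : C(Ω, ℝ) × C(Ω, ℝ) × C(Ω × Ω, ℝ) => F p.1 p.2.1 p.2.2) := by
  refine continuous_iff_continuousAt.2 fun p => ?_
  obtain ⟨L, hL, hFL⟩ := hF (‖p‖ + 1) (by positivity)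
  have hball : ∀ q ∈ Metric.ball p 1, ‖q‖ ≤ ‖p‖ + 1 := fun q hq => by
    have := mem_ball_iff_norm.1 hq
    linarith [norm_le_insert' q p]
  have hlip : LipschitzOnWith (3 * L).toNNReal
      (fun p : C(Ω, ℝ) × C(Ω, ℝ) × C(Ω × Ω, ℝ) => F p.1 p.2.1 p.2.2) (Metric.ball p 1) := by
    refine LipschitzOnWith.of_dist_le_mul fun q hq q' hq' => ?_
    have hq₁ := hball q hq
    have hq₁' := hball q' hq'
    have h₁ := norm_fst_le (q - q')
    have h₂ := (norm_fst_le (q - q').2).trans (norm_snd_le (q - q'))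
    have h₃ := (norm_snd_le (q - q').2).trans (norm_snd_le (q - q'))
    rw [dist_eq_norm, dist_eq_norm, Real.coe_toNNReal _ (by positivity)]
    simp only [Prod.fst_sub, Prod.snd_sub] at h₁ h₂ h₃
    calc ‖F q.1 q.2.1 q.2.2 - F q'.1 q'.2.1 q'.2.2‖
        ≤ L * (‖q.1 - q'.1‖ + ‖q.2.1 - q'.2.1‖ + ‖q.2.2 - q'.2.2‖) :=
          hFL _ _ _ _ _ _ ((norm_fst_le q).trans hq₁)
            (((norm_fst_le q.2).trans (norm_snd_le q)).trans hq₁)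
            (((norm_snd_le q.2).trans (norm_snd_le q)).trans hq₁) ((norm_fst_le q').trans hq₁')
            (((norm_fst_le q'.2).trans (norm_snd_le q')).trans hq₁')
            (((norm_snd_le q'.2).trans (norm_snd_le q')).trans hq₁')
      _ ≤ 3 * L * ‖q - q'‖ := by nlinarith
  exact hlip.continuousOn.continuousAt (Metric.ball_mem_nhds p one_pos)

lemma continuousOn_of_eq_delayed {A τ : ℝ → C(Ω, ℝ)} {w : ℝ → C(Ω × Ω, ℝ)} {r : ℝ}
    (hA : ContinuousOn A (Iic r)) (hτ : ContinuousOn τ (Icc 0 r))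
    (hτnn : ∀ l ∈ Icc (0 : ℝ) r, ∀ x : Ω, 0 ≤ τ l x)
    (hw : ∀ l ∈ Icc (0 : ℝ) r, ∀ x y : Ω, w l (x, y) = A (l - τ l x) y) :
    ContinuousOn w (Icc 0 r) := by
  rw [continuousOn_iff_continuous_domRestrict]
  apply ContinuousMap.continuous_of_continuous_uncurry
  have hdelay : Continuous fun q : Icc (0 : ℝ) r × (Ω × Ω) => (q.1 : ℝ) - τ q.1 q.2.1 :=
    continuous_subtype_val.comp continuous_fst |>.sub
      (((continuousOn_iff_continuous_domRestrict.1 hτ).comp continuous_fst).eval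
        (continuous_fst.comp continuous_snd))
  have hmem : ∀ q : Icc (0 : ℝ) r × (Ω × Ω), (q.1 : ℝ) - τ q.1 q.2.1 ∈ Iic r := fun q =>
    mem_Iic.2 (by linarith [q.1.2.2, hτnn q.1 q.1.2 q.2.1])
  exact (((continuousOn_iff_continuous_domRestrict.1 hA).comp (hdelay.subtype_mk hmem)).eval
    (continuous_snd.comp continuous_snd)).congr fun q => (hw q.1 q.1.2 q.2.1 q.2.2).symm

lemma lipschitzOnWith_of_eq_integral {A g : ℝ → C(Ω, ℝ)} {a : C(Ω, ℝ)} {r : ℝ} {B : ℝ≥0}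
    (hg : ContinuousOn g (Icc 0 r)) (hB : ∀ l ∈ Icc (0 : ℝ) r, ‖g l‖ ≤ B)
    (hA : ∀ t ∈ Icc (0 : ℝ) r, ∀ x : Ω, A t x = a x + ∫ l in (0 : ℝ)..t, g l x) :
    LipschitzOnWith B A (Icc 0 r) := by
  refine LipschitzOnWith.of_dist_le_mul fun t ht s hs => ?_
  wlog hst : s ≤ t generalizing s t
  · rw [dist_comm, dist_comm t]; exact this s hs t ht (le_of_not_ge hst)
  rw [dist_eq_norm, Real.dist_eq, abs_of_nonneg (sub_nonneg.2 hst),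
    ContinuousMap.norm_le _ (by positivity)]
  intro x
  have hgx : ContinuousOn (fun l => g l x) (Icc 0 r) :=
    (continuous_eval_const x).comp_continuousOn hg
  have hint : ∀ u ∈ Icc (0 : ℝ) r, IntervalIntegrable (fun l => g l x) volume 0 u := fun u hu =>
    (hgx.mono (by rw [uIcc_of_le hu.1]; exact Icc_subset_Icc_right hu.2)).intervalIntegrable
  have hdiff : A t x - A s x = ∫ l in s..t, g l x := by
    rw [hA t ht, hA s hs, ← integral_interval_sub_left (hint t ht) (hint s hs)]
    ring
  rw [ContinuousMap.sub_apply, hdiff, ← abs_of_nonneg (sub_nonneg.2 hst)]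
  refine norm_integral_le_of_norm_le_const fun l hl => ?_
  rw [uIoc_of_le hst] at hl
  exact (ContinuousMap.norm_coe_le_norm _ x).trans (hB l ⟨hs.1.trans hl.1.le, hl.2.trans ht.2⟩)

lemma IsSolutionOn.exists_lipschitzOnWith {F : C(Ω, ℝ) → C(Ω, ℝ) → C(Ω × Ω, ℝ) → C(Ω, ℝ)}
    {f : C(Ω, ℝ) → C(Ω, ℝ)} {φ : ℝ → C(Ω, ℝ)} {τ₀ : C(Ω, ℝ)} {r : ℝ} {A τ : ℝ → C(Ω, ℝ)}
    (hsol : IsSolutionOn F f φ τ₀ r A τ) (hF : LipschitzOnBoundedSets F) :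
    ∃ B : ℝ≥0, LipschitzOnWith B A (Icc 0 r) := by
  obtain ⟨hA, hτ, hτnn, -, ⟨w, hw, hAint⟩, -⟩ := hsol
  have hg : ContinuousOn (fun l => F (A l) (τ l) (w l)) (Icc 0 r) :=
    hF.continuous.comp_continuousOn ((hA.mono Icc_subset_Iic_self).prodMk
      (hτ.prodMk (continuousOn_of_eq_delayed hA hτ hτnn hw)))
  obtain ⟨B, hB⟩ := isCompact_Icc.exists_bound_of_continuousOn hg
  exact ⟨B.toNNReal, lipschitzOnWith_of_eq_integral hg
    (fun l hl => (hB l hl).trans (Real.le_coe_toNNReal B)) hAint⟩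

end Solution

theorem stmt_14_general
    {n : ℕ}
    (Ω : Set (EuclideanSpace ℝ (Fin n))) [CompactSpace Ω]
    (f : C(Ω, ℝ) → C(Ω, ℝ))
    (F : C(Ω, ℝ) → C(Ω, ℝ) → C(Ω × Ω, ℝ) → C(Ω, ℝ))
    (hF : LipschitzOnBoundedSets F)
    (α : ℝ) (hα : 0 ≤ α)
    (M : ℝ)
    (r : ℝ)
    (φ : ℝ → C(Ω, ℝ)) (hφ : MemLipAlpha α φ)
    (τ₀ : C(Ω, ℝ))
    (A τ : ℝ → C(Ω, ℝ)) (hsol : IsSolutionOn F f φ τ₀ r A τ)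
    (hAbdd : ∀ t ∈ Set.Icc (0 : ℝ) r, ‖A t‖ ≤ M) :
    ∃ Mhat : ℝ, M < Mhat ∧
      ∀ t ∈ Set.Icc (0 : ℝ) r,
        MemLipAlpha α (fun θ : ℝ => A (t + θ)) ∧
        lipAlphaNorm α (fun θ : ℝ => A (t + θ)) ≤ Mhat := by
  obtain ⟨-, ⟨Cφ, hCφ⟩, ⟨L, hL⟩⟩ := hφ
  obtain ⟨B, hB⟩ := hsol.exists_lipschitzOnWith hF
  obtain ⟨hA, -, -, hAφ, -⟩ := hsol
  lift α to ℝ≥0 using hα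
  have hpast : ∀ s ≤ 0, weightedHist α A s = weightedHist α φ s := fun s hs => by
    simp only [weightedHist, hAφ s hs]
  have hLA : LipschitzOnWith L (weightedHist α A) (Iic 0) :=
    LipschitzOnWith.of_dist_le_mul fun s hs s' hs' => by
      rw [hpast s hs, hpast s' hs']
      exact hL.dist_le_mul s hs s' hs'
  set C := (max Cφ M).toNNReal
  have hCφC : Cφ ≤ C := (le_max_left _ _).trans (Real.le_coe_toNNReal _)
  have hMC : M ≤ C := (le_max_right _ _).trans (Real.le_coe_toNNReal _)
  refine ⟨C + ↑(L + α * C + B) + 1, by linarith [(L + α * C + B).coe_nonneg], fun t ht => ?_⟩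
  refine (memLipAlpha_shift_and_lipAlphaNorm_le ht.1 (hA.mono (Iic_subset_Iic.2 ht.2))
    (fun s hs => (hpast s hs ▸ hCφ s hs).trans hCφC) hLA
    (fun s hs => (hAbdd s ⟨hs.1, hs.2.trans ht.2⟩).trans hMC)
    (hB.mono (Icc_subset_Icc_right ht.2))).imp_right fun h => h.trans (by linarith)

/-- in the setting of the local existence theorem, A_t ∈ Lip_α for every
t ∈ [0,r], and there is a constant M̂ > M (depending on M, the a priori delay bound
τ_max, and α) such that ‖A_t‖_{Lip_α} ≤ M̂ for all t ∈ [0,r]. -/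
theorem stmt_14
    {n : ℕ} (hn : 1 ≤ n)
    (Ω : Set (EuclideanSpace ℝ (Fin n))) (hΩ : IsCompact Ω) [CompactSpace Ω]
    (f : C(Ω, ℝ) → C(Ω, ℝ)) (Kf : ℝ≥0) (hf_lip : LipschitzWith Kf f)
    (hf_mono : ∀ u v : C(Ω, ℝ), u ≤ v → f v ≤ f u)
    (Mbar : ℝ) (hMbar : 0 < Mbar)
    (hf_bdd : ∀ (ψ : C(Ω, ℝ)) (x : Ω), 0 < f ψ x ∧ f ψ x ≤ Mbar)
    (F : C(Ω, ℝ) → C(Ω, ℝ) → C(Ω × Ω, ℝ) → C(Ω, ℝ))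
    (hF : LipschitzOnBoundedSets F)
    (α : ℝ) (hα : 0 ≤ α)
    (M₀ M : ℝ) (hM₀ : 0 < M₀) (hM : M₀ < M)
    (r : ℝ) (hr : 0 < r)
    (φ : ℝ → C(Ω, ℝ)) (hφ : MemLipAlpha α φ)
    (τ₀ : C(Ω, ℝ)) (hτ₀ : ∀ x, 0 ≤ τ₀ x)
    (hinit : lipAlphaNorm α φ + ‖τ₀‖ ≤ M₀)
    (A τ : ℝ → C(Ω, ℝ)) (hsol : IsSolutionOn F f φ τ₀ r A τ)
    (hAbdd : ∀ t ∈ Set.Icc (0 : ℝ) r, ‖A t‖ ≤ M)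
    (τmax : ℝ) (hτmax : ∀ t ∈ Set.Icc (0 : ℝ) r, ∀ x : Ω, τ t x ≤ τmax) :
    ∃ Mhat : ℝ, M < Mhat ∧
      ∀ t ∈ Set.Icc (0 : ℝ) r,
        MemLipAlpha α (fun θ : ℝ => A (t + θ)) ∧
        lipAlphaNorm α (fun θ : ℝ => A (t + θ)) ≤ Mhat :=
  stmt_14_general Ω f F hF α hα M r φ hφ τ₀ A τ hsol hAbdd
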